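/- arXiv:2104.11646 — 4 statements merged into one kernel-verified Lean document; each statement's English description precedes it below -/
import Mathlib

section
/- For every two integers n and k with 2 ≤ k ≤ n, the generalized k-connectivity of the complete graph K_n equals n − ⌈k/2⌉. -/
open SimpleGraph Finset

/-- The `n`-dimensional hypercube: vertices are binary strings of length `n`,
adjacent iff they differ in exactly one coordinate. -/
def Q (n : ℕ) : SimpleGraph (Fin n → Bool) where
  Adj x y := (Finset.univ.filter fun i => x i ≠ y i).card = 1
  symm := by
    constructor
    intro x y h
    simpa [ne_comm] using h
  loopless := by constructor; intro x h; simp at h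

instance (n : ℕ) : DecidableRel (Q n).Adj := fun x y =>
  inferInstanceAs (Decidable ((Finset.univ.filter fun i => x i ≠ y i).card = 1))

/-- The `n`-dimensional folded hypercube: the hypercube plus an edge between each
vertex and its bitwise complement. -/
def FQ (n : ℕ) : SimpleGraph (Fin n → Bool) where
  Adj x y := x ≠ y ∧ ((Finset.univ.filter fun i => x i ≠ y i).card = 1 ∨ ∀ i, x i = !(y i))
  symm := by
    constructor
    rintro x y ⟨hne, h⟩
    refine ⟨hne.symm, ?_⟩
    rcases h with h | h
    · left; simpa [ne_comm] using h
    · right; intro i; simp [h i]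
  loopless := by constructor; rintro x ⟨hne, _⟩; exact hne rfl

instance (n : ℕ) : DecidableRel (FQ n).Adj := fun x y =>
  inferInstanceAs (Decidable (x ≠ y ∧ ((Finset.univ.filter fun i => x i ≠ y i).card = 1 ∨ ∀ i, x i = !(y i))))

/-- `T` is an `S`-tree in `G`: a subgraph of `G` containing `S` which is a tree. -/
def IsSTree {V : Type*} (G : SimpleGraph V) (S : Set V) (T : G.Subgraph) : Prop :=
  S ⊆ T.verts ∧ T.coe.IsTree

/-- A family of subgraphs is internally disjoint w.r.t. `S`: pairwise edge-disjoint
and any two share vertices exactly in `S`. -/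
def InternallyDisjoint {V : Type*} (G : SimpleGraph V) (S : Set V) {r : ℕ}
    (T : Fin r → G.Subgraph) : Prop :=
  ∀ i j, i ≠ j → (T i).edgeSet ∩ (T j).edgeSet = ∅ ∧ (T i).verts ∩ (T j).verts = S

/-- The maximum number of internally disjoint `S`-trees in `G`. -/
noncomputable def maxSTrees {V : Type*} (G : SimpleGraph V) (S : Set V) : ℕ :=
  sSup {r | ∃ T : Fin r → G.Subgraph, (∀ i, IsSTree G S (T i)) ∧ InternallyDisjoint G S T}

/-- The generalized `k`-connectivity of `G`. -/
noncomputable def gencon {V : Type*} [Fintype V] (G : SimpleGraph V) (k : ℕ) : ℕ :=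
  sInf ((fun S : Finset V => maxSTrees G (↑S : Set V)) '' {S | S.card = k})

/-- The vertex connectivity: minimum size of a vertex set whose removal disconnects
the graph or reduces it to at most a single vertex. -/
noncomputable def vconn {V : Type*} [Fintype V] (G : SimpleGraph V) : ℕ :=
  sInf {m | ∃ W : Finset V, W.card = m ∧
    (¬ (G.induce ((↑W : Set V)ᶜ)).Connected ∨ Fintype.card V ≤ W.card + 1)}

/-!
Fix `S` with `|S| = k`. An `S`-tree that leaves `S` owns a vertex outside `S` that no other tree
of the family meets, and an `S`-tree inside `S` spans `S`, so it uses `k - 1` of the `C(k, 2)`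
edges inside `S`; hence at most `(n - k) + ⌊k/2⌋` internally disjoint `S`-trees exist.
Conversely the stars joining each vertex outside `S` to `S`, together with `⌊k/2⌋` edge-disjoint
double stars spanning `S`, attain this bound. Since spanning trees of edge-disjoint connected
subgraphs are again internally disjoint, connected subgraphs suffice for the construction.
-/

namespace SimpleGraph

variable {V : Type*} {G : SimpleGraph V}

lemma Subgraph.Connected.exists_isTree_le {H : G.Subgraph} (hH : H.Connected) :
    ∃ T ≤ H, T.verts = H.verts ∧ T.coe.IsTree := by
  obtain ⟨T', hle, hT'⟩ := hH.coe.exists_isTree_le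
  let T : G.Subgraph :=
    { verts := H.verts
      Adj := fun x y => ∃ hx hy, T'.Adj ⟨x, hx⟩ ⟨y, hy⟩
      adj_sub := fun ⟨_, _, h⟩ => H.adj_sub (hle h)
      edge_vert := fun ⟨hx, _, _⟩ => hx
      symm := ⟨fun _ _ ⟨hx, hy, h⟩ => ⟨hy, hx, h.symm⟩⟩ }
  have hcoe : T.coe = T' := by
    ext ⟨x, hx⟩ ⟨y, hy⟩
    exact ⟨fun ⟨_, _, h⟩ => h, fun h => ⟨hx, hy, h⟩⟩
  exact ⟨T, ⟨le_rfl, fun x y ⟨_, _, h⟩ => hle h⟩, rfl, hcoe ▸ hT'⟩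

lemma Subgraph.Connected.ncard_verts_le_ncard_edgeSet_add_one {H : G.Subgraph}
    (hH : H.Connected) : H.verts.ncard ≤ H.edgeSet.ncard + 1 := by
  rw [← H.image_coe_edgeSet_coe,
    Set.ncard_image_of_injective _ (Sym2.map.injective Subtype.val_injective)]
  exact hH.coe.card_vert_le_card_edgeSet_add_one

lemma Copy.toSubgraph_connected {W : Type*} {A : SimpleGraph W} (f : Copy A G)
    (hA : A.Connected) : f.toSubgraph.Connected :=
  Subgraph.connected_iff'.2 (f.isoToSubgraph.connected_iff.1 hA)

def Copy.toCompleteGraph {W : Type*} (A : SimpleGraph W) (f : W ↪ V) :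
    A.Copy (⊤ : SimpleGraph V) :=
  (Embedding.completeGraph f).toCopy.comp (Copy.ofLE A ⊤ le_top)

lemma Copy.verts_toSubgraph_toCompleteGraph {W : Type*} (A : SimpleGraph W) (f : W ↪ V) :
    (Copy.toCompleteGraph A f).toSubgraph.verts = Set.range f := by
  simp [Copy.toCompleteGraph]

lemma Copy.edgeSet_toSubgraph_toCompleteGraph {W : Type*} (A : SimpleGraph W) (f : W ↪ V) :
    (Copy.toCompleteGraph A f).toSubgraph.edgeSet = Sym2.map f '' A.edgeSet := by
  simp [Copy.toCompleteGraph]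

end SimpleGraph

lemma Nat.le_div_two_of_mul_sub_one_le_choose_two {a m : ℕ} (hm : 2 ≤ m)
    (h : a * (m - 1) ≤ m.choose 2) : a ≤ m / 2 := by
  rw [Nat.choose_two_right, Nat.le_div_iff_mul_le two_pos] at h
  rw [Nat.le_div_iff_mul_le two_pos]
  refine Nat.le_of_mul_le_mul_right ?_ (show 0 < m - 1 by omega)
  calc a * 2 * (m - 1) = a * (m - 1) * 2 := by ring
    _ ≤ m * (m - 1) := h

/-- The centres are `2 * i` and `2 * i + 1`. A vertex of a later pair is joined to the centre of
its own parity, one of an earlier pair to the centre of the other parity: the edge between pairs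
`a < b` lies in the double star of `a` iff its ends have equal parity, and otherwise in that of `b`.
-/
def pairedDoubleStar (k i : ℕ) : SimpleGraph (Fin k) :=
  SimpleGraph.fromRel fun x y =>
    (x : ℕ) / 2 = i ∧ (i < (y : ℕ) / 2 ↔ (x : ℕ) % 2 = (y : ℕ) % 2)

lemma pairedDoubleStar_connected {k i : ℕ} (hi : 2 * i + 1 < k) :
    (pairedDoubleStar k i).Connected := by
  have hc : (pairedDoubleStar k i).Adj ⟨2 * i, by omega⟩ ⟨2 * i + 1, hi⟩ := by
    simp only [pairedDoubleStar, fromRel_adj, ne_eq, Fin.ext_iff]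
    omega
  refine (connected_iff_exists_forall_reachable _).2 ⟨⟨2 * i, by omega⟩, fun y => ?_⟩
  by_cases h0 : (pairedDoubleStar k i).Adj ⟨2 * i, by omega⟩ y
  · exact h0.reachable
  by_cases h1 : (pairedDoubleStar k i).Adj ⟨2 * i + 1, hi⟩ y
  · exact hc.reachable.trans h1.reachable
  simp only [pairedDoubleStar, fromRel_adj, ne_eq, Fin.ext_iff] at h0 h1
  obtain rfl | rfl : y = ⟨2 * i, by omega⟩ ∨ y = ⟨2 * i + 1, hi⟩ := by
    simp only [Fin.ext_iff]; omega
  · rfl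
  · exact hc.reachable

lemma pairedDoubleStar_disjoint {k i j : ℕ} (hij : i ≠ j) :
    Disjoint (pairedDoubleStar k i) (pairedDoubleStar k j) := by
  rw [SimpleGraph.disjoint_left]
  intro x y
  simp only [pairedDoubleStar, fromRel_adj]
  omega

section STrees

variable {V : Type*} {G : SimpleGraph V}

def HasInternallyDisjointSTrees (G : SimpleGraph V) (S : Set V) (r : ℕ) : Prop :=
  ∃ T : Fin r → G.Subgraph, (∀ i, IsSTree G S (T i)) ∧ InternallyDisjoint G S T

lemma hasInternallyDisjointSTrees_of_connected {S : Set V} {ι : Type*} [Fintype ι]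
    (H : ι → G.Subgraph) (hconn : ∀ i, (H i).Connected) (hS : ∀ i, S ⊆ (H i).verts)
    (hdisj : ∀ i j, i ≠ j →
      Disjoint (H i).edgeSet (H j).edgeSet ∧ (H i).verts ∩ (H j).verts = S) :
    HasInternallyDisjointSTrees G S (Fintype.card ι) := by
  choose T hle hverts htree using fun i => (hconn i).exists_isTree_le
  let e := Fintype.equivFin ι
  refine ⟨fun a => T (e.symm a), fun a => ⟨hverts _ ▸ hS _, htree _⟩, fun a b hab => ?_⟩
  have hne : e.symm a ≠ e.symm b := e.symm.injective.ne hab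
  refine ⟨Set.disjoint_iff_inter_eq_empty.1 ?_, ?_⟩
  · exact (hdisj _ _ hne).1.mono (Subgraph.edgeSet_mono (hle _)) (Subgraph.edgeSet_mono (hle _))
  · rw [hverts, hverts, (hdisj _ _ hne).2]

variable [Fintype V] {S : Finset V} {r : ℕ} {T : Fin r → G.Subgraph}

lemma card_mul_le_choose_two_of_verts_subset (hS : ∀ i, IsSTree G S (T i))
    (hT : InternallyDisjoint G S T) {I : Finset (Fin r)} (hI : ∀ i ∈ I, (T i).verts ⊆ S) :
    #I * (#S - 1) ≤ (#S).choose 2 := by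
  classical
  let E : Fin r → Finset (Sym2 V) := fun i => (T i).edgeSet.toFinset
  have hcard : ∀ i ∈ I, #S - 1 ≤ #(E i) := by
    intro i hi
    have := (Subgraph.connected_iff'.2 (hS i).2.connected).ncard_verts_le_ncard_edgeSet_add_one
    rw [(hI i hi).antisymm (hS i).1, Set.ncard_coe_finset] at this
    rw [← Set.ncard_eq_toFinset_card']
    omega
  have hsub : I.biUnion E ⊆ S.offDiag.image Sym2.mk.uncurry := by
    intro e he
    obtain ⟨i, hi, he⟩ := mem_biUnion.1 he
    induction e using Sym2.ind with
    | h x y =>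
    have hxy : (T i).Adj x y := by simpa [E] using he
    exact mem_image.2 ⟨(x, y), mem_offDiag.2 ⟨hI i hi hxy.fst_mem, hI i hi hxy.snd_mem,
      G.ne_of_adj ((T i).adj_sub hxy)⟩, rfl⟩
  have hdisj : (I : Set (Fin r)).PairwiseDisjoint E := fun i _ j _ hij => by
    simpa [E, Set.disjoint_iff_inter_eq_empty] using (hT i j hij).1
  calc #I * (#S - 1) = ∑ _ ∈ I, (#S - 1) := by rw [sum_const, smul_eq_mul]
    _ ≤ ∑ i ∈ I, #(E i) := sum_le_sum hcard
    _ = #(I.biUnion E) := (card_biUnion hdisj).symm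
    _ ≤ #(S.offDiag.image Sym2.mk.uncurry) := card_le_card hsub
    _ = (#S).choose 2 := Sym2.card_image_offDiag S

variable [DecidableEq V]

lemma card_le_card_compl_of_not_verts_subset (hT : InternallyDisjoint G S T) {I : Finset (Fin r)}
    (hI : ∀ i ∈ I, ¬ (T i).verts ⊆ S) : #I ≤ #Sᶜ := by
  classical
  let F : Fin r → Finset V := fun i => {v ∈ Sᶜ | v ∈ (T i).verts}
  have hdisj : (I : Set (Fin r)).PairwiseDisjoint F := by
    refine fun i _ j _ hij => Finset.disjoint_left.2 fun v hvi hvj => ?_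
    have hv : v ∈ (T i).verts ∩ (T j).verts := ⟨(mem_filter.1 hvi).2, (mem_filter.1 hvj).2⟩
    rw [(hT i j hij).2] at hv
    exact mem_compl.1 (mem_filter.1 hvi).1 hv
  have hne : ∀ i ∈ I, (F i).Nonempty := by
    intro i hi
    obtain ⟨v, hv, hvS⟩ := Set.not_subset.1 (hI i hi)
    exact ⟨v, mem_filter.2 ⟨mem_compl.2 hvS, hv⟩⟩
  calc #I ≤ #(I.biUnion F) := card_le_card_biUnion hdisj hne
    _ ≤ #Sᶜ := card_le_card (biUnion_subset.2 fun i _ => filter_subset _ _)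

lemma HasInternallyDisjointSTrees.le_card_compl_add_card_div_two (hS : 2 ≤ #S)
    (h : HasInternallyDisjointSTrees G S r) : r ≤ #Sᶜ + #S / 2 := by
  classical
  obtain ⟨T, hT, hdisj⟩ := h
  have hsplit := card_filter_add_card_filter_not (s := univ) fun i => (T i).verts ⊆ S
  have hin := Nat.le_div_two_of_mul_sub_one_le_choose_two hS
    (card_mul_le_choose_two_of_verts_subset hT hdisj (I := {i | (T i).verts ⊆ S})
      fun i hi => (mem_filter.1 hi).2)
  have hout := card_le_card_compl_of_not_verts_subset hdisj (I := {i | ¬ (T i).verts ⊆ S})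
    fun i hi => (mem_filter.1 hi).2
  rw [card_univ, Fintype.card_fin] at hsplit
  omega

end STrees

section CompleteGraph

variable {V : Type*}

def starSubgraph (v : V) (S : Set V) : (⊤ : SimpleGraph V).Subgraph where
  verts := insert v S
  Adj x y := x ≠ y ∧ (x = v ∧ y ∈ S ∨ y = v ∧ x ∈ S)
  adj_sub h := h.1
  edge_vert := by
    rintro x y ⟨-, ⟨rfl, -⟩ | ⟨-, hx⟩⟩
    exacts [Set.mem_insert _ _, Set.mem_insert_of_mem _ hx]
  symm := ⟨fun _ _ ⟨hne, h⟩ => ⟨hne.symm, h.symm⟩⟩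

lemma starSubgraph_connected (v : V) (S : Set V) : (starSubgraph v S).Connected := by
  refine Subgraph.connected_iff'.2 <| (connected_iff_exists_forall_reachable _).2
    ⟨⟨v, Set.mem_insert _ _⟩, fun ⟨x, hx⟩ => ?_⟩
  obtain rfl | hxv := eq_or_ne x v
  · rfl
  · exact Adj.reachable (G := (starSubgraph v S).coe)
      ⟨hxv.symm, Or.inl ⟨rfl, (Set.mem_insert_iff.1 hx).resolve_left hxv⟩⟩

lemma disjoint_edgeSet_starSubgraph {v : V} {S : Set V} {K : (⊤ : SimpleGraph V).Subgraph}
    (hv : v ∉ K.verts) : Disjoint (starSubgraph v S).edgeSet K.edgeSet := by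
  refine Set.disjoint_left.2 fun e he heK => ?_
  induction e using Sym2.ind with
  | h x y =>
  obtain ⟨-, ⟨rfl, -⟩ | ⟨rfl, -⟩⟩ := he
  exacts [hv (K.edge_vert heK), hv (K.edge_vert heK.symm)]

lemma starSubgraph_verts_inter {v : V} {S : Set V} {K : (⊤ : SimpleGraph V).Subgraph}
    (hv : v ∉ K.verts) (hS : S ⊆ K.verts) : (starSubgraph v S).verts ∩ K.verts = S := by
  rw [starSubgraph, Set.insert_inter_of_notMem hv, Set.inter_eq_left.2 hS]

lemma hasInternallyDisjointSTrees_top [Fintype V] [DecidableEq V] (S : Finset V) :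
    HasInternallyDisjointSTrees (⊤ : SimpleGraph V) S (#Sᶜ + #S / 2) := by
  let f : Fin #S ↪ V := S.equivFin.symm.toEmbedding.trans (Function.Embedding.subtype _)
  have hf : Set.range f = S := by
    ext x
    exact ⟨by rintro ⟨i, rfl⟩; exact (S.equivFin.symm i).2,
      fun hx => ⟨S.equivFin ⟨x, hx⟩, by simp [f]⟩⟩
  let D : Fin (#S / 2) → (⊤ : SimpleGraph V).Subgraph := fun i =>
    (Copy.toCompleteGraph (pairedDoubleStar #S i) f).toSubgraph
  have hD : ∀ i, (D i).verts = S := fun i => (Copy.verts_toSubgraph_toCompleteGraph _ f).trans hf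
  have hv_double : ∀ (v : ↥Sᶜ) i, (v : V) ∉ (D i).verts := fun v i => by
    simpa [hD] using mem_compl.1 v.2
  have hv_star : ∀ v w : ↥Sᶜ, v ≠ w → (v : V) ∉ (starSubgraph (w : V) S).verts :=
    fun v w hne => by
      simpa [starSubgraph, Subtype.val_injective.ne hne] using mem_compl.1 v.2
  have hcross : ∀ (v : ↥Sᶜ) i, Disjoint (starSubgraph (v : V) S).edgeSet (D i).edgeSet ∧
      (starSubgraph (v : V) S).verts ∩ (D i).verts = S := fun v i =>
    ⟨disjoint_edgeSet_starSubgraph (hv_double v i),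
      starSubgraph_verts_inter (hv_double v i) (hD i).ge⟩
  convert hasInternallyDisjointSTrees_of_connected
    (Sum.elim (fun v : ↥Sᶜ => starSubgraph (v : V) S) D) ?_ ?_ ?_ using 1
  · simp [card_compl]
  · rintro (v | i)
    · exact starSubgraph_connected _ _
    · exact Copy.toSubgraph_connected _ (pairedDoubleStar_connected (by omega))
  · rintro (v | i)
    · exact Set.subset_insert _ _
    · exact (hD i).ge
  · rintro (v | i) (w | j) hne
    · have hne' : v ≠ w := fun h => hne (congrArg _ h)
      exact ⟨disjoint_edgeSet_starSubgraph (hv_star v w hne'),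
        starSubgraph_verts_inter (hv_star v w hne') (Set.subset_insert _ _)⟩
    · exact hcross v j
    · exact ⟨(hcross w i).1.symm, Set.inter_comm _ _ ▸ (hcross w i).2⟩
    · have hij : (i : ℕ) ≠ j := fun h => hne (congrArg _ (Fin.ext h))
      refine ⟨?_, by simp only [Sum.elim_inr, hD, Set.inter_self]⟩
      simp only [Sum.elim_inr, D, Copy.edgeSet_toSubgraph_toCompleteGraph]
      exact (Set.disjoint_image_iff (Sym2.map.injective f.injective)).2
        (disjoint_edgeSet.2 (pairedDoubleStar_disjoint hij))

end CompleteGraph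

lemma maxSTrees_top {V : Type*} [Fintype V] [DecidableEq V] {S : Finset V} (hS : 2 ≤ #S) :
    maxSTrees (⊤ : SimpleGraph V) S = #Sᶜ + #S / 2 :=
  IsGreatest.csSup_eq ⟨hasInternallyDisjointSTrees_top S,
    fun _ h => HasInternallyDisjointSTrees.le_card_compl_add_card_div_two hS h⟩

lemma gencon_eq_of_forall_card_eq {V : Type*} [Fintype V] {G : SimpleGraph V} {k m : ℕ}
    (hk : k ≤ Fintype.card V) (h : ∀ S : Finset V, #S = k → maxSTrees G S = m) :
    gencon G k = m := by
  obtain ⟨S₀, -, hS₀⟩ :=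
    exists_subset_card_eq (s := (univ : Finset V)) (n := k) (by rwa [card_univ])
  have himage : (fun S : Finset V => maxSTrees G S) '' {S | #S = k} = {m} :=
    Set.eq_singleton_iff_unique_mem.2
      ⟨⟨S₀, hS₀, h S₀ hS₀⟩, fun _ ⟨S, hS, hm⟩ => hm ▸ h S hS⟩
  rw [gencon, himage, csInf_singleton]

lemma gencon_top {V : Type*} [Fintype V] [DecidableEq V] {k : ℕ} (hk : 2 ≤ k)
    (hkV : k ≤ Fintype.card V) : gencon (⊤ : SimpleGraph V) k = Fintype.card V - (k + 1) / 2 :=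
  gencon_eq_of_forall_card_eq hkV fun S hS => by
    rw [maxSTrees_top (hS ▸ hk), card_compl, hS]
    omega

theorem gencon_completeGraph (n k : ℕ) (hk : 2 ≤ k) (hkn : k ≤ n) :
    gencon (⊤ : SimpleGraph (Fin n)) k = n - (k + 1) / 2 := by
  simpa using gencon_top (V := Fin n) hk (by simpa using hkn)
end

section
/- Let G be a connected graph with minimum degree δ. If G contains two adjacent vertices each of degree δ, then the generalized 3-connectivity of G satisfies κ_3(G) ≤ δ − 1. -/
open SimpleGraph Finset

/-!
Take `S = {x, y, z}` for any third vertex `z`. An `S`-tree is connected and contains `x`, `y`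
and `z`, so it has two distinct edges meeting `{x, y}`: the edge by which a path from `z` first
enters `{x, y}`, and an edge at the other vertex of `{x, y}`. Internally disjoint trees are
edge-disjoint, and since `x` and `y` share the edge `xy` they meet only `2δ - 1` edges, so at
most `δ - 1` trees fit.
-/

namespace SimpleGraph

variable {V : Type*} {G : SimpleGraph V}

theorem card_incidenceFinset_union_add_one_of_adj [DecidableEq V] {x y : V}
    [Fintype (G.neighborSet x)] [Fintype (G.neighborSet y)] (hxy : G.Adj x y) :
    #(G.incidenceFinset x ∪ G.incidenceFinset y) + 1 = G.degree x + G.degree y := by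
  have hinter : G.incidenceFinset x ∩ G.incidenceFinset y = {s(x, y)} := by
    rw [← coe_inj, coe_inter, coe_incidenceFinset, coe_incidenceFinset, coe_singleton,
      G.incidenceSet_inter_incidenceSet_of_adj hxy]
  rw [← card_incidenceFinset_eq_degree, ← card_incidenceFinset_eq_degree,
    ← card_union_add_card_inter, hinter, card_singleton]

namespace Subgraph

variable {H : G.Subgraph}

theorem Preconnected.exists_adj_boundary (hH : H.Preconnected) {u v : V} (hu : u ∈ H.verts)
    (hv : v ∈ H.verts) {S : Set V} (huS : u ∈ S) (hvS : v ∉ S) :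
    ∃ a b, H.Adj a b ∧ a ∈ S ∧ b ∉ S := by
  obtain ⟨p⟩ := hH.coe ⟨u, hu⟩ ⟨v, hv⟩
  obtain ⟨d, -, hd₁, hd₂⟩ := p.exists_boundary_dart (Subtype.val ⁻¹' S) huS hvS
  exact ⟨d.fst, d.snd, d.adj, hd₁, hd₂⟩

theorem Preconnected.exists_ne_edges_of_adj (hH : H.Preconnected) {a x y : V}
    (hax : H.Adj a x) (hay : a ≠ y) (hxy : x ≠ y) (hy : y ∈ H.verts) :
    ∃ e₁ ∈ H.edgeSet, ∃ e₂ ∈ H.edgeSet, e₁ ≠ e₂ ∧ x ∈ e₁ ∧ y ∈ e₂ := by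
  obtain ⟨c, d, hcd, rfl, -⟩ :=
    hH.exists_adj_boundary hy hax.fst_mem (S := {y}) rfl hay
  refine ⟨s(a, x), hax, s(c, d), hcd, fun h ↦ ?_, Sym2.mem_mk_right _ _, Sym2.mem_mk_left _ _⟩
  have hc : c ∈ s(a, x) := h ▸ Sym2.mem_mk_left _ _
  rcases Sym2.mem_iff.1 hc with rfl | rfl
  exacts [hay rfl, hxy rfl]

theorem Preconnected.exists_ne_edges_incident (hH : H.Preconnected) {x y z : V}
    (hx : x ∈ H.verts) (hy : y ∈ H.verts) (hz : z ∈ H.verts)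
    (hxy : x ≠ y) (hzx : z ≠ x) (hzy : z ≠ y) :
    ∃ e₁ ∈ H.edgeSet, ∃ e₂ ∈ H.edgeSet, e₁ ≠ e₂ ∧ (x ∈ e₁ ∨ y ∈ e₁) ∧ (x ∈ e₂ ∨ y ∈ e₂) := by
  obtain ⟨a, b, hab, ⟨hax, hay⟩, hb⟩ :=
    hH.exists_adj_boundary hz hx (S := {w | w ≠ x ∧ w ≠ y}) ⟨hzx, hzy⟩ (by simp)
  by_cases hbx : b = x
  · subst hbx
    obtain ⟨e₁, h₁, e₂, h₂, hne, hx₁, hy₂⟩ := hH.exists_ne_edges_of_adj hab hay hxy hy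
    exact ⟨e₁, h₁, e₂, h₂, hne, .inl hx₁, .inr hy₂⟩
  · obtain rfl : b = y := by simpa [hbx] using hb
    obtain ⟨e₁, h₁, e₂, h₂, hne, hy₁, hx₂⟩ := hH.exists_ne_edges_of_adj hab hax hxy.symm hx
    exact ⟨e₁, h₁, e₂, h₂, hne, .inr hy₁, .inl hx₂⟩

end Subgraph

theorem card_mul_le_card_of_pairwise_disjoint_edgeSet {ι : Type*} [Fintype ι]
    {T : ι → G.Subgraph} (hT : Pairwise fun i j ↦ Disjoint (T i).edgeSet (T j).edgeSet)
    (B : Finset (Sym2 V)) [∀ i, DecidablePred (· ∈ (T i).edgeSet)] {k : ℕ}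
    (hk : ∀ i, k ≤ #{e ∈ B | e ∈ (T i).edgeSet}) :
    Fintype.card ι * k ≤ #B := by
  classical
  calc Fintype.card ι * k ≤ ∑ i, #{e ∈ B | e ∈ (T i).edgeSet} := by
        simpa using card_nsmul_le_sum univ _ k fun i _ ↦ hk i
    _ = #(univ.biUnion fun i ↦ {e ∈ B | e ∈ (T i).edgeSet}) := by
        refine (card_biUnion fun i _ j _ hij ↦
          Finset.disjoint_left.2 fun e hi hj ↦ ?_).symm
        exact Set.disjoint_left.1 (hT hij) (mem_filter.1 hi).2 (mem_filter.1 hj).2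
    _ ≤ #B := card_le_card (biUnion_subset.2 fun i _ ↦ filter_subset _ _)

end SimpleGraph

section

variable {V : Type*} {G : SimpleGraph V}

theorem gencon_eq_zero_of_card_lt [Fintype V] {k : ℕ} (hk : Fintype.card V < k) :
    gencon G k = 0 := by
  have : {S : Finset V | #S = k} = ∅ :=
    Set.eq_empty_of_forall_notMem fun S hS ↦ (card_le_univ S).not_gt (hS ▸ hk)
  rw [gencon, this, Set.image_empty, Nat.sInf_empty]

theorem gencon_card_le_maxSTrees [Fintype V] (S : Finset V) : gencon G #S ≤ maxSTrees G S :=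
  Nat.sInf_le ⟨S, rfl, rfl⟩

theorem maxSTrees_le {S : Set V} {m : ℕ}
    (h : ∀ r (T : Fin r → G.Subgraph), (∀ i, IsSTree G S (T i)) → InternallyDisjoint G S T →
      r ≤ m) :
    maxSTrees G S ≤ m :=
  csSup_le ⟨0, Fin.elim0, Fin.rec0, Fin.rec0⟩ fun r ⟨T, hT, hID⟩ ↦ h r T hT hID

theorem IsSTree.one_lt_card_filter_incidenceFinset [DecidableEq V] {S : Set V} {T : G.Subgraph}
    (hT : IsSTree G S T) {x y z : V} [Fintype (G.neighborSet x)] [Fintype (G.neighborSet y)]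
    [DecidablePred (· ∈ T.edgeSet)] (hx : x ∈ S) (hy : y ∈ S) (hz : z ∈ S)
    (hxy : x ≠ y) (hzx : z ≠ x) (hzy : z ≠ y) :
    1 < #{e ∈ G.incidenceFinset x ∪ G.incidenceFinset y | e ∈ T.edgeSet} := by
  have hT' : T.Preconnected := ⟨hT.2.connected.preconnected⟩
  obtain ⟨e₁, h₁, e₂, h₂, hne, hxy₁, hxy₂⟩ :=
    hT'.exists_ne_edges_incident (hT.1 hx) (hT.1 hy) (hT.1 hz) hxy hzx hzy
  have mem_filter_of_mem {e} (he : e ∈ T.edgeSet) (hxye : x ∈ e ∨ y ∈ e) :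
      e ∈ {e ∈ G.incidenceFinset x ∪ G.incidenceFinset y | e ∈ T.edgeSet} := by
    refine mem_filter.2 ⟨mem_union.2 <| hxye.imp (fun h ↦ ?_) (fun h ↦ ?_), he⟩ <;>
      exact (mem_incidenceFinset _ _ _).2 ⟨T.edgeSet_subset he, h⟩
  exact one_lt_card.2 ⟨e₁, mem_filter_of_mem h₁ hxy₁, e₂, mem_filter_of_mem h₂ hxy₂, hne⟩

theorem two_mul_maxSTrees_add_one_le {S : Set V} {x y z : V} [Fintype (G.neighborSet x)]
    [Fintype (G.neighborSet y)] (hxy : G.Adj x y) (hx : x ∈ S) (hy : y ∈ S) (hz : z ∈ S)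
    (hzx : z ≠ x) (hzy : z ≠ y) :
    2 * maxSTrees G S + 1 ≤ G.degree x + G.degree y := by
  classical
  have hB := card_incidenceFinset_union_add_one_of_adj hxy
  suffices maxSTrees G S ≤ (G.degree x + G.degree y - 1) / 2 by omega
  refine maxSTrees_le fun r T hT hID ↦ ?_
  have hdisj : Pairwise fun i j ↦ Disjoint (T i).edgeSet (T j).edgeSet :=
    fun i j hij ↦ Set.disjoint_iff_inter_eq_empty.2 (hID i j hij).1
  have := card_mul_le_card_of_pairwise_disjoint_edgeSet hdisj _ (k := 2) fun i ↦
    (hT i).one_lt_card_filter_incidenceFinset hx hy hz hxy.ne hzx hzy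
  rw [Fintype.card_fin] at this
  omega

end

theorem gencon_three_le_of_adj_minDegree_general {V : Type*} [Fintype V] (G : SimpleGraph V)
    [DecidableRel G.Adj] (x y : V) (hxy : G.Adj x y)
    (hx : G.degree x = G.minDegree) (hy : G.degree y = G.minDegree) :
    gencon G 3 ≤ G.minDegree - 1 := by
  classical
  by_cases hV : Fintype.card V < 3
  · simp [gencon_eq_zero_of_card_lt hV]
  obtain ⟨z, -, hz⟩ := exists_mem_notMem_of_card_lt_card (s := {x, y}) (t := univ) <| by
    have := card_le_two (a := x) (b := y)
    rw [card_univ]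
    omega
  obtain ⟨hzx, hzy⟩ : z ≠ x ∧ z ≠ y := by simpa [not_or] using hz
  have hS : #{x, y, z} = 3 := card_eq_three.2 ⟨x, y, z, hxy.ne, hzx.symm, hzy.symm, rfl⟩
  have hgencon := hS ▸ gencon_card_le_maxSTrees (G := G) {x, y, z}
  have hmax := two_mul_maxSTrees_add_one_le (S := ↑({x, y, z} : Finset V)) hxy
    (by simp) (by simp) (by simp) hzx hzy
  omega

theorem gencon_three_le_of_adj_minDegree {V : Type*} [Fintype V] (G : SimpleGraph V)
    [DecidableRel G.Adj] (hG : G.Connected) (x y : V) (hxy : G.Adj x y)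
    (hx : G.degree x = G.minDegree) (hy : G.degree y = G.minDegree) :
    gencon G 3 ≤ G.minDegree - 1 :=
  gencon_three_le_of_adj_minDegree_general G x y hxy hx hy
end

section
/- For n ≥ 2, the diameter of the folded hypercube FQ_n equals ⌈n/2⌉. -/
/-! The distance in `FQ n` between `x` and `y` is `min h (n + 1 - h)` with `h` their Hamming
distance: `h` is achieved by flipping differing coordinates one at a time, and `n + 1 - h` by first
jumping to the complement of `x`. Conversely, this quantity changes by at most one along every edge
(a complement edge turns `h` into `n - h`), so it bounds the distance from below. Its maximum over
`0 ≤ h ≤ n` is `⌈n / 2⌉`. -/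

open SimpleGraph Finset

namespace SimpleGraph

variable {V : Type*} {G : SimpleGraph V} {f : V → ℕ}

theorem Walk.le_add_length_of_adj (hf : ∀ a b, G.Adj a b → f a ≤ f b + 1) {u v : V}
    (p : G.Walk u v) : f u ≤ f v + p.length := by
  induction p with
  | nil => simp
  | cons h _ ih =>
    rw [Walk.length_cons]
    have := hf _ _ h
    omega

theorem le_add_edist_of_adj (hf : ∀ a b, G.Adj a b → f a ≤ f b + 1) (u v : V) :
    (f u : ℕ∞) ≤ f v + G.edist u v := by
  by_cases hr : G.Reachable u v
  · obtain ⟨p, hp⟩ := hr.exists_walk_length_eq_edist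
    rw [← hp]
    exact_mod_cast p.le_add_length_of_adj hf
  · simp [edist_eq_top_of_not_reachable hr]

end SimpleGraph

section Hamming

variable {ι : Type*} [Fintype ι]

theorem hammingDist_compl_add_hammingDist (x y : ι → Bool) :
    hammingDist xᶜ y + hammingDist x y = Fintype.card ι := by
  have : univ.filter (fun i => xᶜ i ≠ y i) = univ.filter (fun i => ¬ x i ≠ y i) := by
    ext i
    cases x i <;> cases y i <;> simp_all
  rw [hammingDist, hammingDist, this, add_comm, card_filter_add_card_filter_not, card_univ]

theorem exists_hammingDist_eq (x : ι → Bool) {k : ℕ} (hk : k ≤ Fintype.card ι) :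
    ∃ y, hammingDist x y = k := by
  classical
  obtain ⟨s, -, hs⟩ := exists_subset_card_eq (s := (univ : Finset ι)) (by simpa using hk)
  refine ⟨fun i => xor (x i) (decide (i ∈ s)), ?_⟩
  rw [← hs, hammingDist]
  congr 1
  ext i
  by_cases hi : i ∈ s <;> cases x i <;> simp [hi]

variable {β : Type*} [DecidableEq ι] [DecidableEq β]

theorem hammingDist_update_self {x : ι → β} {i : ι} {b : β} (h : x i ≠ b) :
    hammingDist x (Function.update x i b) = 1 := by
  rw [hammingDist, card_eq_one]
  refine ⟨i, ?_⟩
  ext j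
  by_cases hj : j = i <;> simp [hj, h]

theorem hammingDist_update_add_one {x y : ι → β} {i : ι} (h : x i ≠ y i) :
    hammingDist (Function.update x i (y i)) y + 1 = hammingDist x y := by
  have hi : i ∈ univ.filter (fun j => x j ≠ y j) := by simpa using h
  have : univ.filter (fun j => Function.update x i (y i) j ≠ y j) =
      (univ.filter fun j => x j ≠ y j).erase i := by
    ext j
    by_cases hj : j = i <;> simp [hj]
  rw [hammingDist, hammingDist, this, card_erase_add_one hi]

end Hamming

namespace FQ

variable {n : ℕ}

theorem adj_of_hammingDist_eq_one {x y : Fin n → Bool} (h : hammingDist x y = 1) :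
    (FQ n).Adj x y :=
  ⟨hammingDist_ne_zero.mp (by omega), Or.inl h⟩

theorem hammingDist_eq_one_or_eq_compl_of_adj {x y : Fin n → Bool} (h : (FQ n).Adj x y) :
    hammingDist x y = 1 ∨ x = yᶜ :=
  h.2.imp id fun h => funext fun i => by simp [h i]

theorem edist_compl_le_one (x : Fin n → Bool) : (FQ n).edist x xᶜ ≤ 1 := by
  rw [edist_le_one_iff_adj_or_eq]
  by_cases h : x = xᶜ
  · exact Or.inr h
  · exact Or.inl ⟨h, Or.inr fun i => by simp⟩

theorem edist_le_hammingDist (x y : Fin n → Bool) : (FQ n).edist x y ≤ hammingDist x y := by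
  induction hxy : hammingDist x y generalizing x with
  | zero => simp [hammingDist_eq_zero.mp hxy]
  | succ k ih =>
    obtain ⟨i, hi⟩ : ∃ i, x i ≠ y i := by
      by_contra! h
      simp [funext h] at hxy
    have hstep := hammingDist_update_add_one hi
    calc (FQ n).edist x y
        ≤ (FQ n).edist x (Function.update x i (y i)) +
            (FQ n).edist (Function.update x i (y i)) y := SimpleGraph.edist_triangle
      _ ≤ 1 + k := by
        gcongr
        · exact (edist_eq_one_iff_adj.mpr (adj_of_hammingDist_eq_one
            (hammingDist_update_self hi))).le
        · exact ih _ (by omega)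
      _ = (k + 1 : ℕ) := by push_cast; ring

theorem edist_le_one_add_hammingDist_compl (x y : Fin n → Bool) :
    (FQ n).edist x y ≤ 1 + hammingDist xᶜ y :=
  SimpleGraph.edist_triangle.trans (add_le_add (edist_compl_le_one x) (edist_le_hammingDist xᶜ y))

theorem min_hammingDist_le_of_adj {a b : Fin n → Bool} (h : (FQ n).Adj a b) (y : Fin n → Bool) :
    min (hammingDist a y) (n + 1 - hammingDist a y) ≤
      min (hammingDist b y) (n + 1 - hammingDist b y) + 1 := by
  rcases hammingDist_eq_one_or_eq_compl_of_adj h with hab | rfl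
  · have hay := hammingDist_triangle a b y
    have hby := hammingDist_triangle b a y
    rw [hammingDist_comm b a] at hby
    omega
  · have hcompl := hammingDist_compl_add_hammingDist b y
    have hle := hammingDist_le_card_fintype (x := b) (y := y)
    simp only [Fintype.card_fin] at *
    omega

theorem edist_eq (x y : Fin n → Bool) :
    (FQ n).edist x y = (min (hammingDist x y) (n + 1 - hammingDist x y) : ℕ) := by
  apply le_antisymm
  · have hcompl := hammingDist_compl_add_hammingDist x y
    have hle := hammingDist_le_card_fintype (x := x) (y := y)
    simp only [Fintype.card_fin] at *
    rw [Nat.mono_cast.map_min]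
    refine le_min (edist_le_hammingDist x y) ((edist_le_one_add_hammingDist_compl x y).trans ?_)
    exact_mod_cast (by omega : 1 + hammingDist xᶜ y ≤ n + 1 - hammingDist x y)
  · simpa using le_add_edist_of_adj (G := FQ n)
      (fun a b h => min_hammingDist_le_of_adj h y) x y

end FQ

theorem FQ_diam_general (n : ℕ) : (FQ n).diam = (n + 1) / 2 := by
  suffices (FQ n).ediam = ((n + 1) / 2 : ℕ) by rw [diam, this, ENat.toNat_natCast]
  apply le_antisymm
  · refine ediam_le_of_edist_le fun x y => ?_
    rw [FQ.edist_eq]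
    exact_mod_cast (by omega : min (hammingDist x y) (n + 1 - hammingDist x y) ≤ (n + 1) / 2)
  · obtain ⟨y, hy⟩ := exists_hammingDist_eq (⊥ : Fin n → Bool) (k := (n + 1) / 2)
      (by simp only [Fintype.card_fin]; omega)
    calc (((n + 1) / 2 : ℕ) : ℕ∞) = (FQ n).edist ⊥ y := by
          rw [FQ.edist_eq, hy]
          congr 1
          omega
      _ ≤ (FQ n).ediam := edist_le_ediam

theorem FQ_diam (n : ℕ) (hn : 2 ≤ n) : (FQ n).diam = (n + 1) / 2 :=
  FQ_diam_general n
end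

section
/- For n ≥ 2, the (vertex) connectivity of the folded hypercube FQ_n equals n + 1. -/
open SimpleGraph Finset

/-!
Measure a vertex `w` by the set of coordinates in which it differs from a base vertex `u`; in
these coordinates `FQ n` becomes the graph on `Finset (Fin n)` in which `X` and `Y` are adjacent
iff `X ∆ Y` is a singleton or everything. If `v ≠ u` differs from `u` exactly on `D`, there are
`n + 1` paths from `∅` to `D` any two of which meet only at their ends: for each of the `#D`
rotations of a fixed cyclic order of `D`, add its elements one at a time; for each `i ∉ D`, go
`∅, {i}, {i} ∪ (growing prefixes of D), {i} ∪ D, D`; finally go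
`∅, univ, univ \ (growing prefixes of D), Dᶜ, D`. Deleting at most `n` vertices misses one of
these paths, so `κ (FQ n) ≥ n + 1`. Conversely, the `n + 1` neighbours of a vertex separate it
from any vertex at distance two.
-/

open scoped symmDiff

section Fan

variable {α β : Type*}

lemma isChain_cons_append_singleton {r : α → α → Prop} {a b x y : α} {M : List α}
    (hM : M.IsChain r) (hx : M.head? = some x) (hy : M.getLast? = some y) (hax : r a x)
    (hyb : r y b) : (a :: (M ++ [b])).IsChain r := by
  refine List.IsChain.cons (List.isChain_append.2 ⟨hM, List.isChain_singleton b, ?_⟩) ?_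
  · simpa [hy] using hyb
  · cases M <;> simp_all

structure IsFan (r : α → α → Prop) (u v : α) (P : List (List α)) : Prop where
  head : ∀ p ∈ P, p.head? = some u
  last : ∀ p ∈ P, p.getLast? = some v
  chain : ∀ p ∈ P, p.IsChain r
  pairwise : P.Pairwise fun p q => ∀ x ∈ p, x ∈ q → x = u ∨ x = v

namespace IsFan

variable {r : α → α → Prop} {u v : α} {P Q : List (List α)}

lemma append (hP : IsFan r u v P) (hQ : IsFan r u v Q)
    (hPQ : ∀ p ∈ P, ∀ q ∈ Q, ∀ x ∈ p, x ∈ q → x = u ∨ x = v) :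
    IsFan r u v (P ++ Q) where
  head p hp := (List.mem_append.1 hp).elim (hP.head p) (hQ.head p)
  last p hp := (List.mem_append.1 hp).elim (hP.last p) (hQ.last p)
  chain p hp := (List.mem_append.1 hp).elim (hP.chain p) (hQ.chain p)
  pairwise := List.pairwise_append.2 ⟨hP.pairwise, hQ.pairwise, hPQ⟩

lemma map {r' : β → β → Prop} {f : α → β} (hf : Function.Injective f)
    (hr : ∀ ⦃x y⦄, r x y → r' (f x) (f y)) (hP : IsFan r u v P) :
    IsFan r' (f u) (f v) (P.map (List.map f)) where
  head := by simp +contextual [List.head?_map, hP.head]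
  last := by simp +contextual [List.getLast?_map, hP.last]
  chain := by simpa [List.isChain_map] using fun p hp => (hP.chain p hp).imp hr
  pairwise := by
    refine List.pairwise_map.2 (hP.pairwise.imp fun h x hx hx' => ?_)
    obtain ⟨y, hy, rfl⟩ := List.mem_map.1 hx
    obtain ⟨y', hy', hyy'⟩ := List.mem_map.1 hx'
    exact (h y hy (hf hyy' ▸ hy')).imp (congrArg f) (congrArg f)

lemma exists_forall_notMem [DecidableEq α] (hP : IsFan r u v P) {W : Finset α} (hu : u ∉ W)
    (hv : v ∉ W) (hW : #W < P.length) : ∃ p ∈ P, ∀ x ∈ p, x ∉ W := by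
  by_contra! h
  -- Pigeonhole: paths that all meet `W` would do so in pairwise distinct vertices.
  choose f hfP hfW using fun i : Fin P.length => h P[i] (List.getElem_mem _)
  have key : ∀ i j : Fin P.length, i < j → f i ≠ f j := fun i j hij heq =>
    (List.pairwise_iff_getElem.1 hP.pairwise i j i.2 j.2 hij (f i) (hfP i) (heq ▸ hfP j)).elim
      (fun h => hu (h ▸ hfW i)) (fun h => hv (h ▸ hfW i))
  have hf : Function.Injective fun i => (⟨f i, hfW i⟩ : W) := fun i j hij => by
    by_contra hne
    rcases lt_or_gt_of_ne hne with hlt | hlt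
    · exact key i j hlt (congrArg Subtype.val hij)
    · exact key j i hlt (congrArg Subtype.val hij).symm
  exact (Fintype.card_le_of_injective _ hf).not_gt (by simpa using hW)

end IsFan

end Fan

lemma SimpleGraph.reachable_induce_of_isChain {V : Type*} {G : SimpleGraph V} {s : Set V}
    {p : List V} (hp : p.IsChain G.Adj) (hps : ∀ x ∈ p, x ∈ s) {u v : V}
    (hu : p.head? = some u) (hv : p.getLast? = some v) (hus : u ∈ s) (hvs : v ∈ s) :
    (G.induce s).Reachable ⟨u, hus⟩ ⟨v, hvs⟩ := by
  induction p generalizing u with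
  | nil => simp at hu
  | cons a p ih =>
    obtain rfl : a = u := by simpa using hu
    cases p with
    | nil =>
      obtain rfl : a = v := by simpa using hv
      rfl
    | cons b p =>
      rw [List.isChain_cons_cons] at hp
      have hbs := hps b (by simp)
      exact (show (G.induce s).Adj ⟨a, hus⟩ ⟨b, hbs⟩ from hp.1).reachable.trans
        (ih hp.2 (fun x hx => hps x (List.mem_cons_of_mem a hx)) rfl
          (by rwa [List.getLast?_cons_cons] at hv) hbs)

lemma IsFan.reachable_induce_compl {V : Type*} [DecidableEq V] {G : SimpleGraph V} {u v : V}
    {P : List (List V)} (hP : IsFan G.Adj u v P) {W : Finset V} (hu : u ∉ W) (hv : v ∉ W)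
    (hW : #W < P.length) : (G.induce (↑W)ᶜ).Reachable ⟨u, hu⟩ ⟨v, hv⟩ := by
  obtain ⟨p, hp, hpW⟩ := hP.exists_forall_notMem hu hv hW
  exact SimpleGraph.reachable_induce_of_isChain (hP.chain p hp) hpW (hP.head p hp)
    (hP.last p hp) _ _

section PrefixUnions

variable {α : Type*} [DecidableEq α]

def prefixUnions (B : Finset α) : List α → List (Finset α)
  | [] => [B]
  | a :: t => B :: prefixUnions (insert a B) t

lemma head?_prefixUnions (B : Finset α) (t : List α) : (prefixUnions B t).head? = some B := by
  cases t <;> rfl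

lemma getLast?_prefixUnions (B : Finset α) (t : List α) :
    (prefixUnions B t).getLast? = some (B ∪ t.toFinset) := by
  induction t generalizing B with
  | nil => simp [prefixUnions]
  | cons a t ih =>
    cases t with
    | nil => simp [prefixUnions]
    | cons b t =>
      rw [prefixUnions, prefixUnions, List.getLast?_cons_cons, ← prefixUnions, ih]
      congr 1
      ext
      simp [or_left_comm]

lemma exists_eq_union_take_of_mem_prefixUnions {B X : Finset α} {t : List α}
    (h : X ∈ prefixUnions B t) : ∃ s, X = B ∪ (t.take s).toFinset := by
  induction t generalizing B with
  | nil => exact ⟨0, by simpa [prefixUnions] using h⟩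
  | cons a t ih =>
    rcases List.mem_cons.1 h with rfl | h
    · exact ⟨0, by simp⟩
    · obtain ⟨s, rfl⟩ := ih h
      exact ⟨s + 1, by ext; simp⟩

end PrefixUnions

section FoldedAdj

variable {α : Type*} [DecidableEq α] [Fintype α]

def FoldedAdj (X Y : Finset α) : Prop := #(X ∆ Y) = 1 ∨ X ∆ Y = univ

lemma FoldedAdj.symm {X Y : Finset α} (h : FoldedAdj X Y) : FoldedAdj Y X := by
  rwa [FoldedAdj, symmDiff_comm]

lemma foldedAdj_compl_iff {X Y : Finset α} : FoldedAdj Xᶜ Yᶜ ↔ FoldedAdj X Y := by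
  rw [FoldedAdj, FoldedAdj, compl_symmDiff_compl]

lemma foldedAdj_empty_iff {X : Finset α} : FoldedAdj ∅ X ↔ #X = 1 ∨ X = univ := by
  rw [FoldedAdj, ← Finset.bot_eq_empty, bot_symmDiff]

lemma foldedAdj_compl_self (X : Finset α) : FoldedAdj Xᶜ X :=
  Or.inr (by ext x; by_cases x ∈ X <;> simp_all)

lemma foldedAdj_insert {B : Finset α} {a : α} (ha : a ∉ B) : FoldedAdj B (insert a B) :=
  Or.inl (by rw [symmDiff_of_le (Finset.subset_insert a B), Finset.insert_sdiff_cancel ha,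
    Finset.card_singleton])

lemma isChain_prefixUnions {B : Finset α} {t : List α} (ht : t.Nodup)
    (htB : ∀ a ∈ t, a ∉ B) :
    (prefixUnions B t).IsChain FoldedAdj := by
  induction t generalizing B with
  | nil => exact List.isChain_singleton B
  | cons a t ih =>
    rw [List.nodup_cons] at ht
    refine List.IsChain.cons (ih ht.2 fun b hb => ?_) ?_
    · simpa [not_or] using ⟨fun h => ht.1 (h ▸ hb), htB b (List.mem_cons_of_mem a hb)⟩
    · simpa [head?_prefixUnions] using foldedAdj_insert (htB a List.mem_cons_self)

end FoldedAdj

section CyclicFan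

variable {α : Type*}

lemma Nat.add_mod_eq_iff_of_lt {p j a k : ℕ} (hp : p < k) (hj : j < k) (ha : a < k) :
    (p + j) % k = a ↔ p + j = a ∨ p + j = a + k := by
  rcases lt_or_ge (p + j) k with h | h
  · rw [Nat.mod_eq_of_lt h]; omega
  · rw [Nat.mod_eq_sub_mod h, Nat.mod_eq_of_lt (by omega)]; omega

lemma List.Nodup.getElem_mem_take_rotate_iff {l : List α} (hl : l.Nodup) {j s a : ℕ}
    (hj : j < l.length) (ha : a < l.length) :
    l[a] ∈ (l.rotate j).take s ↔
      ∃ p < s, p < l.length ∧ (p + j = a ∨ p + j = a + l.length) := by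
  simp only [List.mem_take_iff_getElem, List.getElem_rotate, hl.getElem_inj_iff,
    List.length_rotate, lt_min_iff]
  refine exists_congr fun p => ⟨fun ⟨⟨hps, hpk⟩, h⟩ => ⟨hps, hpk, ?_⟩,
    fun ⟨hps, hpk, h⟩ => ⟨⟨hps, hpk⟩, ?_⟩⟩
  · exact (Nat.add_mod_eq_iff_of_lt hpk hj ha).1 h
  · exact (Nat.add_mod_eq_iff_of_lt hpk hj ha).2 h

variable [DecidableEq α]

/-- A proper nonempty cyclic interval of a duplicate-free list determines its starting point:
it is the only member whose cyclic predecessor is not a member. -/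
lemma List.Nodup.eq_of_toFinset_take_rotate_eq {l : List α} (hl : l.Nodup) {i j s s' : ℕ}
    (hi : i < l.length) (hj : j < l.length) (hs : 0 < s) (hsl : s < l.length)
    (h : ((l.rotate i).take s).toFinset = ((l.rotate j).take s').toFinset) : i = j := by
  have key : ∀ a (ha : a < l.length),
      (∃ p < s, p < l.length ∧ (p + i = a ∨ p + i = a + l.length)) ↔
        ∃ p < s', p < l.length ∧ (p + j = a ∨ p + j = a + l.length) := fun a ha => by
    rw [← hl.getElem_mem_take_rotate_iff hi ha, ← hl.getElem_mem_take_rotate_iff hj ha,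
      ← List.mem_toFinset, h, List.mem_toFinset]
  obtain ⟨p, hps, hpl, hp⟩ := (key i hi).1 ⟨0, hs, by omega, by omega⟩
  by_contra hij
  obtain ⟨a, ha, hai⟩ : ∃ a < l.length, a + 1 = i ∨ a + 1 = i + l.length := by
    rcases i with _ | i
    · exact ⟨l.length - 1, by omega, by omega⟩
    · exact ⟨i, by omega, by omega⟩
  obtain ⟨q, hqs, -, hq⟩ := (key a ha).2 ⟨p - 1, by omega, by omega, by omega⟩
  omega

def cyclicFan (l : List α) : List (List (Finset α)) :=
  (List.range l.length).map fun j => prefixUnions ∅ (l.rotate j)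

lemma subset_of_mem_cyclicFan {l : List α} {p : List (Finset α)} (hp : p ∈ cyclicFan l)
    {X : Finset α} (hX : X ∈ p) : X ⊆ l.toFinset := by
  obtain ⟨j, -, rfl⟩ := List.mem_map.1 hp
  obtain ⟨s, rfl⟩ := exists_eq_union_take_of_mem_prefixUnions hX
  intro x hx
  simpa using List.mem_rotate.1 (List.mem_of_mem_take (by simpa using hx))

lemma isFan_cyclicFan [Fintype α] {l : List α} (hl : l.Nodup) :
    IsFan FoldedAdj ∅ l.toFinset (cyclicFan l) where
  head := by simp [cyclicFan, head?_prefixUnions]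
  last := by
    simpa [cyclicFan, getLast?_prefixUnions] using fun _ _ => by ext; simp [List.mem_rotate]
  chain := by
    simpa [cyclicFan] using fun j _ => isChain_prefixUnions (List.nodup_rotate.2 hl) (by simp)
  pairwise := by
    refine List.pairwise_map.2 (List.pairwise_lt_range.imp_of_mem fun hi hj hij X hX hX' => ?_)
    rw [List.mem_range] at hi hj
    obtain ⟨s, rfl⟩ := exists_eq_union_take_of_mem_prefixUnions hX
    obtain ⟨s', hs'⟩ := exists_eq_union_take_of_mem_prefixUnions hX'
    rw [Finset.empty_union] at hs' ⊢
    rcases Nat.eq_zero_or_pos s with rfl | hs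
    · simp
    rcases lt_or_ge s l.length with hsl | hsl
    · exact absurd (hl.eq_of_toFinset_take_rotate_eq hi hj hs hsl hs') hij.ne
    · right
      ext
      simp [List.take_of_length_le (l := l.rotate _) (by simpa using hsl), List.mem_rotate]

end CyclicFan

section OuterFan

variable {α : Type*} [DecidableEq α]

noncomputable def sidePath (D : Finset α) (i : α) : List (Finset α) :=
  ∅ :: (prefixUnions {i} D.toList ++ [D])

lemma mem_sidePath {D X : Finset α} {i : α} (hX : X ∈ sidePath D i) (hX₀ : X.Nonempty)
    (hXD : X ≠ D) : i ∈ X ∧ X ⊆ insert i D := by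
  simp only [sidePath, List.mem_cons, List.mem_append, List.not_mem_nil, or_false] at hX
  obtain ⟨s, rfl⟩ :=
    exists_eq_union_take_of_mem_prefixUnions ((hX.resolve_left hX₀.ne_empty).resolve_right hXD)
  refine ⟨by simp, fun x hx => ?_⟩
  simp only [Finset.mem_union, Finset.mem_singleton, List.mem_toFinset] at hx
  simpa using hx.imp_right fun hx => Finset.mem_toList.1 (List.mem_of_mem_take hx)

variable [Fintype α]

noncomputable def complPath (D : Finset α) : List (Finset α) :=
  ∅ :: ((prefixUnions ∅ D.toList).map compl ++ [D])

lemma mem_complPath {D X : Finset α} (hX : X ∈ complPath D) (hX₀ : X.Nonempty)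
    (hXD : X ≠ D) :
    Dᶜ ⊆ X := by
  simp only [complPath, List.mem_cons, List.mem_append, List.mem_map, List.not_mem_nil,
    or_false] at hX
  obtain ⟨Y, hY, rfl⟩ := (hX.resolve_left hX₀.ne_empty).resolve_right hXD
  obtain ⟨s, rfl⟩ := exists_eq_union_take_of_mem_prefixUnions hY
  refine Finset.compl_subset_compl.2 fun x hx => ?_
  exact Finset.mem_toList.1 (List.mem_of_mem_take (by simpa using hx))

lemma isChain_sidePath {D : Finset α} {i : α} (hi : i ∉ D) :
    (sidePath D i).IsChain FoldedAdj := by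
  refine isChain_cons_append_singleton (isChain_prefixUnions D.nodup_toList ?_)
    (head?_prefixUnions _ _) (getLast?_prefixUnions _ _) (foldedAdj_empty_iff.2 (by simp)) ?_
  · simpa using fun a ha (h : a = i) => hi (h ▸ ha)
  · simpa [← Finset.insert_eq] using (foldedAdj_insert hi).symm

lemma isChain_complPath (D : Finset α) : (complPath D).IsChain FoldedAdj := by
  refine isChain_cons_append_singleton ?_ (by simp [head?_prefixUnions])
    (by simp [getLast?_prefixUnions]) (foldedAdj_empty_iff.2 (Or.inr rfl))
    (foldedAdj_compl_self D)
  simpa [List.isChain_map, foldedAdj_compl_iff] using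
    isChain_prefixUnions D.nodup_toList (by simp)

lemma exists_fan_not_subset_of_two_le_card_compl {D : Finset α} (hD : 2 ≤ #Dᶜ) :
    ∃ P, IsFan FoldedAdj ∅ D P ∧ P.length = #Dᶜ + 1 ∧
      ∀ p ∈ P, ∀ X ∈ p, X ⊆ D → X = ∅ ∨ X = D := by
  obtain ⟨x, hx⟩ := Finset.card_pos.1 (by omega : 0 < #Dᶜ)
  have hcompl : ¬ Dᶜ ⊆ D := fun h => Finset.mem_compl.1 hx (h hx)
  refine ⟨Dᶜ.toList.map (sidePath D) ++ [complPath D], ⟨?_, ?_, ?_, ?_⟩, by simp, ?_⟩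
  · simp +contextual [or_imp, sidePath, complPath]
  · simp +contextual [or_imp, sidePath, complPath, List.getLast?_cons]
  · simp +contextual [or_imp, isChain_sidePath, isChain_complPath]
  · refine List.pairwise_append.2 ⟨List.pairwise_map.2 (Dᶜ.nodup_toList.imp_of_mem ?_),
      List.pairwise_singleton _ _, ?_⟩
    · intro i j _ hj hij X hXi hXj
      by_contra! h
      have := (mem_sidePath hXj h.1 h.2).2 (mem_sidePath hXi h.1 h.2).1
      simp_all
    · simp only [List.mem_map, List.mem_singleton]
      rintro _ ⟨i, -, rfl⟩ _ rfl X hXi hXc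
      by_contra! h
      have hDi : Dᶜ ⊆ {i} := fun x hx => by
        simpa [Finset.mem_compl.1 hx] using
          (mem_sidePath hXi h.1 h.2).2 (mem_complPath hXc h.1 h.2 hx)
      have := Finset.card_le_card hDi
      simp at this
      omega
  · simp only [List.mem_append, List.mem_map, List.mem_singleton]
    rintro _ (⟨i, hi, rfl⟩ | rfl) X hX hXD <;> by_contra! h
    · exact (Finset.mem_compl.1 (by simpa using hi)) (hXD (mem_sidePath hX h.1 h.2).1)
    · exact hcompl ((mem_complPath hX h.1 h.2).trans hXD)

lemma exists_fan_not_subset {D : Finset α} (hD : D.Nonempty) :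
    ∃ P, IsFan FoldedAdj ∅ D P ∧ P.length = #Dᶜ + 1 ∧
      ∀ p ∈ P, ∀ X ∈ p, X ⊆ D → X = ∅ ∨ X = D := by
  obtain h | h := Nat.lt_or_ge #Dᶜ 2
  swap
  · exact exists_fan_not_subset_of_two_le_card_compl h
  -- Here the side paths and the complement path would collide; they shrink to shortcuts.
  interval_cases hc : #Dᶜ
  · obtain rfl : D = univ := by simpa using hc
    exact ⟨[[∅, univ]], ⟨by simp, by simp, by simp [foldedAdj_empty_iff], by simp⟩, rfl,
      by simp⟩
  · obtain ⟨i, hi⟩ := Finset.card_eq_one.1 hc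
    have hiD : i ∉ D := by simpa using hi.ge (Finset.mem_singleton_self i)
    refine ⟨[[∅, {i}, D], [∅, univ, D]], ⟨by simp, by simp, ?_, ?_⟩, rfl, ?_⟩
    · simp only [List.mem_cons, List.not_mem_nil, or_false, forall_eq_or_imp, forall_eq]
      refine ⟨?_, ?_⟩ <;> simp only [List.isChain_cons_cons, List.isChain_singleton, and_true,
        foldedAdj_empty_iff, Finset.card_singleton, true_or, or_true, true_and]
      · exact hi ▸ foldedAdj_compl_self D
      · exact foldedAdj_compl_iff.1 (by simp [foldedAdj_empty_iff, hc])
    · refine List.pairwise_pair.2 fun X hX hX' => ?_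
      simp only [List.mem_cons, List.not_mem_nil, or_false] at hX hX'
      obtain rfl | rfl | rfl := hX
      · exact Or.inl rfl
      · obtain ⟨d, hd⟩ := hD
        obtain h | h | h := hX'
        · simp at h
        · have := h ▸ Finset.mem_univ d
          exact absurd (Finset.mem_singleton.1 this ▸ hd) hiD
        · exact Or.inr h
      · exact Or.inr rfl
    · simpa using ⟨fun h => absurd h hiD, fun h => Or.inr h.symm⟩

lemma exists_fan_length_eq_card_add_one {D : Finset α} (hD : D.Nonempty) :
    ∃ P, IsFan FoldedAdj ∅ D P ∧ P.length = Fintype.card α + 1 := by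
  obtain ⟨Q, hQ, hQlen, hQD⟩ := exists_fan_not_subset hD
  have hcyc := isFan_cyclicFan D.nodup_toList
  rw [Finset.toList_toFinset] at hcyc
  refine ⟨cyclicFan D.toList ++ Q, hcyc.append hQ fun p hp q hq X hXp hXq => ?_, ?_⟩
  · exact hQD q hq X hXq (by simpa using subset_of_mem_cyclicFan hp hXp)
  · have := Finset.card_add_card_compl D
    simp only [List.length_append, cyclicFan, List.length_map, List.length_range,
      Finset.length_toList, hQlen]
    omega

end OuterFan

section Flip

variable {α : Type*}

def diffSet [Fintype α] (u v : α → Bool) : Finset α := univ.filter fun i => u i ≠ v i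

@[simp]
lemma mem_diffSet [Fintype α] {u v : α → Bool} {i : α} :
    i ∈ diffSet u v ↔ u i ≠ v i := by
  simp [diffSet]

variable [DecidableEq α]

def flipOn (u : α → Bool) (X : Finset α) : α → Bool := fun i => if i ∈ X then !u i else u i

@[simp]
lemma flipOn_empty (u : α → Bool) : flipOn u ∅ = u := by
  funext i; simp [flipOn]

lemma flipOn_injective (u : α → Bool) : Function.Injective (flipOn u) := by
  intro X Y h
  ext i
  have := congrFun h i
  by_cases hX : i ∈ X <;> by_cases hY : i ∈ Y <;> simp_all [flipOn]

variable [Fintype α]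

lemma diffSet_flipOn_flipOn (u : α → Bool) (X Y : Finset α) :
    diffSet (flipOn u X) (flipOn u Y) = X ∆ Y := by
  ext i
  by_cases hX : i ∈ X <;> by_cases hY : i ∈ Y <;> simp [flipOn, Finset.mem_symmDiff, hX, hY]

lemma flipOn_diffSet (u v : α → Bool) : flipOn u (diffSet u v) = v := by
  funext i
  cases hu : u i <;> cases hv : v i <;> simp [flipOn, hu, hv]

end Flip

section FoldedCube

variable {n : ℕ}

lemma FQ_adj_iff {x y : Fin n → Bool} :
    (FQ n).Adj x y ↔ x ≠ y ∧ (#(diffSet x y) = 1 ∨ diffSet x y = univ) := by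
  simp only [Finset.eq_univ_iff_forall, mem_diffSet, ne_eq, ← Bool.eq_not_iff]
  rfl

lemma FQ_adj_flipOn (hn : 0 < n) (u : Fin n → Bool) {X Y : Finset (Fin n)}
    (h : FoldedAdj X Y) : (FQ n).Adj (flipOn u X) (flipOn u Y) := by
  refine FQ_adj_iff.2 ⟨fun hXY => ?_, by rwa [diffSet_flipOn_flipOn]⟩
  obtain rfl := flipOn_injective u hXY
  have : (univ : Finset (Fin n)).Nonempty := ⟨⟨0, hn⟩, mem_univ _⟩
  simp_all [FoldedAdj, this.ne_empty.symm]

lemma FQ_reachable_induce_compl (hn : 0 < n) {W : Finset (Fin n → Bool)} (hW : #W ≤ n)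
    {u v : Fin n → Bool} (hu : u ∉ W) (hv : v ∉ W) :
    ((FQ n).induce (↑W)ᶜ).Reachable ⟨u, hu⟩ ⟨v, hv⟩ := by
  obtain rfl | huv := eq_or_ne u v
  · rfl
  have hD : (diffSet u v).Nonempty := by
    by_contra! h
    exact huv (by rw [← flipOn_diffSet u v, h, flipOn_empty])
  obtain ⟨P, hP, hPlen⟩ := exists_fan_length_eq_card_add_one hD
  have hP' := hP.map (flipOn_injective u) fun X Y => FQ_adj_flipOn hn u
  rw [flipOn_empty, flipOn_diffSet] at hP'
  exact hP'.reachable_induce_compl hu hv (by simp [hPlen]; omega)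

lemma FQ_connected_induce_compl (hn : 0 < n) {W : Finset (Fin n → Bool)} (hW : #W ≤ n) :
    ((FQ n).induce (↑W)ᶜ).Connected := by
  obtain ⟨x, -, hx⟩ := Finset.exists_mem_notMem_of_card_lt_card (s := W) (t := univ)
    (by simpa using hW.trans_lt Nat.lt_two_pow_self)
  refine (SimpleGraph.connected_iff _).2 ⟨?_, ⟨⟨x, hx⟩⟩⟩
  rintro ⟨u, hu⟩ ⟨v, hv⟩
  exact FQ_reachable_induce_compl hn hW hu hv

end FoldedCube

section Vconn

variable {V : Type*}

lemma SimpleGraph.not_connected_induce_compl {G : SimpleGraph V} {W : Set V} {x y : V}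
    (hx : x ∉ W) (hy : y ∉ W) (hxy : x ≠ y) (hW : ∀ z, G.Adj x z → z ∈ W) :
    ¬ (G.induce Wᶜ).Connected := fun h => by
  obtain ⟨p⟩ := h.preconnected ⟨x, hx⟩ ⟨y, hy⟩
  have hne : (⟨x, hx⟩ : ↥Wᶜ) ≠ ⟨y, hy⟩ := fun h => hxy (congrArg Subtype.val h)
  exact p.snd.2 (hW _ (p.adj_snd (SimpleGraph.Walk.not_nil_of_ne hne)))

lemma le_vconn [Fintype V] {G : SimpleGraph V} {k : ℕ}
    (h : ∀ W : Finset V, #W < k → (G.induce (↑W)ᶜ).Connected ∧ #W + 1 < Fintype.card V) :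
    k ≤ vconn G := by
  refine le_csInf ⟨_, univ, rfl, Or.inr (by simp)⟩ ?_
  rintro _ ⟨W, rfl, hW⟩
  by_contra! hWk
  obtain ⟨hconn, hcard⟩ := h W hWk
  exact hW.elim (· hconn) (by omega)

end Vconn

lemma vconn_FQ_le {n : ℕ} (hn : 2 ≤ n) : vconn (FQ n) ≤ n + 1 := by
  let u : Fin n → Bool := fun _ => false
  let S : Finset (Finset (Fin n)) := insert univ (powersetCard 1 univ)
  have hS : ∀ {X}, X ∈ S ↔ X = univ ∨ #X = 1 := by simp [S, Finset.mem_powersetCard]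
  have hSn : #S = n + 1 := by
    rw [Finset.card_insert_of_notMem (by simp; omega), Finset.card_powersetCard]
    simp
  have hWn : #(S.image (flipOn u)) = n + 1 := by
    rw [card_image_of_injective _ (flipOn_injective u), hSn]
  refine Nat.sInf_le ⟨S.image (flipOn u), hWn, ?_⟩
  obtain rfl | hn3 := (show n = 2 ∨ 3 ≤ n by omega)
  · exact Or.inr (by simp [hWn])
  have hnotMem : ∀ {X}, X ∉ S → flipOn u X ∉ (S.image (flipOn u) : Set _) := by
    simp [(flipOn_injective u).eq_iff]
  refine Or.inl (SimpleGraph.not_connected_induce_compl (x := flipOn u ∅)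
    (y := flipOn u {⟨0, by omega⟩, ⟨1, by omega⟩}) (hnotMem ?_) (hnotMem ?_)
    ((flipOn_injective u).ne (Finset.insert_ne_empty _ _).symm) fun z hz => ?_)
  · rw [hS]
    simp [Finset.eq_univ_iff_forall]
    exact ⟨⟨0, by omega⟩⟩
  · rw [hS]
    simp only [Finset.eq_univ_iff_forall, not_or]
    refine ⟨fun h => ?_, by simp⟩
    simpa [Fin.ext_iff] using h ⟨2, by omega⟩
  · obtain ⟨-, h⟩ := FQ_adj_iff.1 (by rwa [flipOn_empty] at hz)
    simpa using ⟨diffSet u z, hS.2 h.symm, flipOn_diffSet u z⟩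

theorem vconn_FQ (n : ℕ) (hn : 2 ≤ n) : vconn (FQ n) = n + 1 := by
  refine (vconn_FQ_le hn).antisymm (le_vconn fun W hW =>
    ⟨FQ_connected_induce_compl (by omega) (by omega), ?_⟩)
  obtain ⟨m, rfl⟩ := Nat.exists_eq_add_of_le' hn
  have := Nat.lt_two_pow_self (n := m + 1)
  simp [pow_succ]
  omega
end
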